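/- If a permutation p of length n can be sorted by t stacks in series by some sequence of legal moves, then it can be sorted by a sequence of legal moves with the property that at every critical moment (just before each element enters the stacks), no stack that lies to the left of a nonempty stack is empty. -/

import Mathlib

/-- A configuration for sorting with `t` stacks in series: the remaining input,
the stacks (index `0` is the leftmost, next to the output; index `t-1` is the
rightmost, next to the input; the head of each list is the top of the stack),
and the output produced so far. -/
structure Conf where
  input : List ℕ
  stks : List (List ℕ)
  output : List ℕ
deriving DecidableEq, Repr

/-- `x` may be placed on top of a stack iff the stack is empty or `x` is smaller
than the current top (stacks are increasing from top to bottom). -/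
def canPush (x : ℕ) : List ℕ → Bool
  | [] => true
  | y :: _ => decide (x < y)

/-- Moves, ordered left to right: `0` = pop the leftmost stack to the output
(legal only for the next element of the identity); `m` with `0 < m < t` = move the
top of stack `m` one stack to the left; `t` = push the next input element onto the
rightmost stack. -/
def legal (t : ℕ) (c : Conf) (m : ℕ) : Bool :=
  if m = 0 then
    match c.stks.getD 0 [] with
    | x :: _ => x == c.output.length + 1
    | [] => false
  else if m < t then
    match c.stks.getD m [] with
    | x :: _ => canPush x (c.stks.getD (m-1) [])
    | [] => false
  else if m = t then
    match c.input with
    | x :: _ => canPush x (c.stks.getD (t-1) [])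
    | [] => false
  else false

/-- Perform move `m` on configuration `c` (with `t` stacks). -/
def applyMove (t : ℕ) (c : Conf) (m : ℕ) : Conf :=
  if m = 0 then
    match c.stks.getD 0 [] with
    | x :: s => ⟨c.input, c.stks.set 0 s, c.output ++ [x]⟩
    | [] => c
  else if m < t then
    match c.stks.getD m [] with
    | x :: s => ⟨c.input, (c.stks.set m s).set (m-1) (x :: c.stks.getD (m-1) []), c.output⟩
    | [] => c
  else
    match c.input with
    | x :: rest => ⟨rest, c.stks.set (t-1) (x :: c.stks.getD (t-1) []), c.output⟩
    | [] => c

def initConf (t : ℕ) (p : List ℕ) : Conf := ⟨p, List.replicate t [], []⟩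

/-- The fully sorted configuration: empty input and stacks, output `1,2,...,n`. -/
def finalConf (t n : ℕ) : Conf := ⟨[], List.replicate t [], List.range' 1 n⟩

/-- Run a sequence of moves, requiring each to be legal. -/
def runLegal (t : ℕ) : Conf → List ℕ → Option Conf
  | c, [] => some c
  | c, m :: ms => if legal t c m then runLegal t (applyMove t c m) ms else none

/-- `p` is sortable by `t` stacks in series by some sequence of legal moves. -/
def Sortable (t : ℕ) (p : List ℕ) : Prop :=
  ∃ ms : List ℕ, runLegal t (initConf t p) ms = some (finalConf t p.length)

/-- The leftmost legal move, if any. -/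
def leftMove (t : ℕ) (c : Conf) : Option ℕ :=
  ((List.range (t+1)).filter (fun m => legal t c m)).head?

/-- The rightmost legal move, if any. -/
def rightMove (t : ℕ) (c : Conf) : Option ℕ :=
  ((List.range (t+1)).filter (fun m => legal t c m)).getLast?

/-- One step of a greedy algorithm given by the move selector `mv`
(the configuration is unchanged if no move is legal, i.e. the algorithm fails or is done). -/
def greedyStep (mv : ℕ → Conf → Option ℕ) (t : ℕ) (c : Conf) : Conf :=
  match mv t c with
  | some m => applyMove t c m
  | none => c

/-- The greedy algorithm given by `mv` sorts `p` with `t` stacks in series. -/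
def GreedySorts (mv : ℕ → Conf → Option ℕ) (t : ℕ) (p : List ℕ) : Prop :=
  ∃ k : ℕ, (greedyStep mv t)^[k] (initConf t p) = finalConf t p.length

def LeftGreedySorts : ℕ → List ℕ → Prop := GreedySorts leftMove
def RightGreedySorts : ℕ → List ℕ → Prop := GreedySorts rightMove

/-- `p` is a permutation of `1,...,n` (as a list). -/
def IsPermOf (n : ℕ) (p : List ℕ) : Prop := p.Perm (List.range' 1 n)

/-- The position of the element `x` in configuration `c`: `0` if in the output
(furthest left), `j+1` if in stack `j`, `t+1` if still in the input (furthest right). -/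
def posOf (t : ℕ) (c : Conf) (x : ℕ) : ℕ :=
  if x ∈ c.output then 0
  else match (List.range t).find? (fun j => decide (x ∈ c.stks.getD j [])) with
    | some j => j + 1
    | none => t + 1

/-- `c` is at the `i`-th critical moment for the greedy algorithm `mv` on a
permutation of length `n`: either the chosen move is the entry of the `i`-th
element into the stacks, or the algorithm fails (no legal move, incomplete output). -/
def IsCrit (mv : ℕ → Conf → Option ℕ) (t i n : ℕ) (c : Conf) : Prop :=
  (c.input.length + i = n + 1 ∧ mv t c = some t) ∨
  (mv t c = none ∧ c.output.length < n)

/-- `c` is the configuration at the `i`-th critical moment of the greedy algorithm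
`mv` run on `p` (the first moment along the run satisfying `IsCrit`). -/
def CritConf (mv : ℕ → Conf → Option ℕ) (t i n : ℕ) (p : List ℕ) (c : Conf) : Prop :=
  ∃ k : ℕ, (greedyStep mv t)^[k] (initConf t p) = c ∧ IsCrit mv t i n c ∧
    ∀ k' < k, ¬ IsCrit mv t i n ((greedyStep mv t)^[k'] (initConf t p))

/-- No stack is empty while some stack to its right is nonempty. -/
def NoGap (t : ℕ) (c : Conf) : Prop :=
  ∀ j j' : ℕ, j < j' → j' < t → c.stks.getD j' [] ≠ [] → c.stks.getD j [] ≠ []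

/-- `r` contains `q` as a pattern. -/
def ContainsPat (r q : List ℕ) : Prop :=
  ∃ f : Fin q.length → Fin r.length, StrictMono f ∧
    ∀ a b : Fin q.length, q.get a < q.get b ↔ r.get (f a) < r.get (f b)

namespace StmtAux

lemma getD_set_self {l : List (List ℕ)} {i : ℕ} (h : i < l.length) (s : List ℕ) :
    (l.set i s).getD i [] = s := by
  rw [List.getD_eq_getElem _ _ (by simpa using h)]
  simp

lemma getD_set_ne {l : List (List ℕ)} {i j : ℕ} (h : i ≠ j) (s : List ℕ) :
    (l.set i s).getD j [] = l.getD j [] := by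
  simp [List.getD_eq_getElem?_getD, List.getElem?_set_ne h]

lemma stks_ext {l₁ l₂ : List (List ℕ)} (h : l₁.length = l₂.length)
    (h2 : ∀ i, l₁.getD i [] = l₂.getD i []) : l₁ = l₂ := by
  apply List.ext_getElem h
  intro i h1' h2'
  have := h2 i
  rwa [List.getD_eq_getElem _ _ h1', List.getD_eq_getElem _ _ h2'] at this

lemma getD_replicate (t m : ℕ) : (List.replicate t ([] : List ℕ)).getD m [] = [] := by
  simp [List.getD_eq_getElem?_getD, List.getElem?_replicate]
  split <;> rfl

lemma lt_length_of_getD_ne {l : List (List ℕ)} {i : ℕ} (h : l.getD i [] ≠ []) :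
    i < l.length := by
  by_contra hc
  exact h (List.getD_eq_default _ _ (le_of_not_gt hc))

lemma chain_lt_head {l : List ℕ} {x : ℕ} (h : List.Chain' (· < ·) (x :: l)) :
    ∀ b ∈ l, x < b := by
  replace h := List.isChain_iff_pairwise.1 h
  exact (List.pairwise_cons.1 h).1

lemma canPush_head {x : ℕ} {L : List ℕ} (h : canPush x L = true) :
    L = [] ∨ ∃ y s, L = y :: s ∧ x < y := by
  cases L with
  | nil => exact Or.inl rfl
  | cons y s => right; exact ⟨y, s, rfl, by simpa [canPush] using h⟩

lemma canPush_intro {x : ℕ} {L : List ℕ} (h : L = [] ∨ ∀ y ∈ L.head?, x < y) :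
    canPush x L = true := by
  cases L with
  | nil => rfl
  | cons y s =>
    simp [canPush]
    rcases h with h | h
    · exact absurd h (by simp)
    · exact h y rfl

/-- step lemma: pop -/
lemma step_pop {t : ℕ} {c : Conf} {s : List ℕ}
    (hs : c.stks.getD 0 [] = (c.output.length + 1) :: s) :
    legal t c 0 = true ∧
      applyMove t c 0 = ⟨c.input, c.stks.set 0 s, c.output ++ [c.output.length + 1]⟩ := by
  constructor
  · unfold legal
    rw [if_pos rfl, hs]
    simp
  · unfold applyMove
    rw [if_pos rfl, hs]

/-- step lemma: internal move -/
lemma step_move {t mv : ℕ} {c : Conf} {x : ℕ} {s : List ℕ}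
    (h0 : 0 < mv) (hlt : mv < t) (hx : c.stks.getD mv [] = x :: s)
    (hp : canPush x (c.stks.getD (mv - 1) []) = true) :
    legal t c mv = true ∧
      applyMove t c mv =
        ⟨c.input, (c.stks.set mv s).set (mv - 1) (x :: c.stks.getD (mv - 1) []), c.output⟩ := by
  constructor
  · unfold legal
    rw [if_neg (by omega), if_pos hlt, hx]
    exact hp
  · unfold applyMove
    rw [if_neg (by omega), if_pos hlt, hx]

/-- step lemma: push -/
lemma step_push {t : ℕ} {c : Conf} {x : ℕ} {rest : List ℕ}
    (ht : 0 < t) (hin : c.input = x :: rest)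
    (hp : canPush x (c.stks.getD (t - 1) []) = true) :
    legal t c t = true ∧
      applyMove t c t = ⟨rest, c.stks.set (t - 1) (x :: c.stks.getD (t - 1) []), c.output⟩ := by
  constructor
  · unfold legal
    rw [if_neg (by omega), if_neg (by omega), if_pos rfl, hin]
    exact hp
  · unfold applyMove
    rw [if_neg (by omega), if_neg (by omega), hin]

/-- inversion of a legal move -/
lemma legal_cases {t mv : ℕ} {c : Conf} (h : legal t c mv = true) :
    (mv = 0 ∧ ∃ s, c.stks.getD 0 [] = (c.output.length + 1) :: s) ∨
    (0 < mv ∧ mv < t ∧ ∃ x s, c.stks.getD mv [] = x :: s ∧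
        canPush x (c.stks.getD (mv - 1) []) = true) ∨
    (mv = t ∧ 0 < t ∧ ∃ x rest, c.input = x :: rest ∧
        canPush x (c.stks.getD (t - 1) []) = true) := by
  by_cases h0 : mv = 0
  · subst h0
    left
    refine ⟨rfl, ?_⟩
    unfold legal at h
    rw [if_pos rfl] at h
    cases hx : c.stks.getD 0 [] with
    | nil => rw [hx] at h; simp at h
    | cons y s =>
      rw [hx] at h
      simp at h
      exact ⟨s, by rw [h]⟩
  · by_cases hlt : mv < t
    · right; left
      refine ⟨by omega, hlt, ?_⟩
      unfold legal at h
      rw [if_neg h0, if_pos hlt] at h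
      cases hx : c.stks.getD mv [] with
      | nil => rw [hx] at h; simp at h
      | cons y s =>
        rw [hx] at h
        exact ⟨y, s, rfl, h⟩
    · right; right
      unfold legal at h
      rw [if_neg h0, if_neg hlt] at h
      by_cases hmt : mv = t
      · subst hmt
        rw [if_pos rfl] at h
        refine ⟨rfl, by omega, ?_⟩
        cases hin : c.input with
        | nil => rw [hin] at h; simp at h
        | cons y rest =>
          rw [hin] at h
          exact ⟨y, rest, rfl, h⟩
      · rw [if_neg hmt] at h; simp at h


/-- The difference invariant: `c'` is `c` with element `x` moved from stack `m`
(where it sits under `A`, above `B`) to the bottom of stack `m-1`. -/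
def Rel (t m x : ℕ) (c c' : Conf) : Prop :=
  c.stks.length = t ∧ c'.stks.length = t ∧ c'.input = c.input ∧ c'.output = c.output ∧
  (∀ w ∈ c.stks.getD (m-1) [], w < x) ∧
  (c'.stks.getD (m-1) [] = c.stks.getD (m-1) [] ++ [x]) ∧
  (∀ j, j ≠ m → j ≠ m - 1 → c'.stks.getD j [] = c.stks.getD j []) ∧
  ∃ A B : List ℕ, c.stks.getD m [] = A ++ x :: B ∧ c'.stks.getD m [] = A ++ B ∧
    (∀ a ∈ A, a < x) ∧ (∀ b ∈ B, x < b)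

lemma canPush_head' {x : ℕ} {L : List ℕ} (h : canPush x L = true) :
    ∀ y ∈ L.head?, x < y := by
  rcases canPush_head h with h | ⟨y, s, rfl, hy⟩
  · subst h; simp
  · simpa using hy

lemma exch {t n m x : ℕ} (hm0 : 0 < m) (hmt : m < t) (σ : List ℕ) :
    ∀ {c c' : Conf}, Rel t m x c c' → runLegal t c σ = some (finalConf t n) →
      ∃ σ' : List ℕ, σ'.length + 1 = σ.length ∧ runLegal t c' σ' = some (finalConf t n) := by
  induction σ with
  | nil =>
    intro c c' hrel hrun
    obtain ⟨hL, hL', hI, hO, hml, hmlc, hoth, A, B, hAB, hAB', hAx, hBx⟩ := hrel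
    simp only [runLegal, Option.some.injEq] at hrun
    rw [hrun] at hAB
    simp only [finalConf, getD_replicate] at hAB
    have hlenAB := congrArg List.length hAB
    simp only [List.length_nil, List.length_append, List.length_cons] at hlenAB
    omega
  | cons mv σr ih =>
    intro c c' hrel hrun
    obtain ⟨hL, hL', hI, hO, hml, hmlc, hoth, A, B, hAB, hAB', hAx, hBx⟩ := hrel
    simp only [runLegal] at hrun
    by_cases hleg : legal t c mv = true
    · rw [if_pos hleg] at hrun
      have hmlen : m < c.stks.length := by omega
      have hm1len : m - 1 < c.stks.length := by omega
      have hmlen' : m < c'.stks.length := by omega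
      have hm1len' : m - 1 < c'.stks.length := by omega
      -- helper to finish mirrored cases
      have conclude : ∀ (hleg' : legal t c' mv = true),
          Rel t m x (applyMove t c mv) (applyMove t c' mv) →
          ∃ σ' : List ℕ, σ'.length + 1 = (mv :: σr).length ∧
            runLegal t c' σ' = some (finalConf t n) := by
        intro hleg' hrel2
        obtain ⟨σ', hl, hr⟩ := ih hrel2 hrun
        refine ⟨mv :: σ', by simp only [List.length_cons]; omega, ?_⟩
        simp [runLegal, hleg']
        exact hr
      rcases legal_cases hleg with ⟨hmv0, s, hs⟩ | ⟨hmv0, hmvt, y, s, hy, hcp⟩ |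
        ⟨hmvt, ht0, x0, rest, hin, hcp⟩
      · -- CASE pop
        subst hmv0
        obtain ⟨_, happ⟩ := step_pop hs
        by_cases hm1 : m = 1
        · -- m - 1 = 0 : the popped stack carries x at the bottom in c'
          subst hm1
          simp only [Nat.sub_self] at hml hmlc hoth hm1len hm1len'
          have hc'0 : c'.stks.getD 0 [] = (c'.output.length + 1) :: (s ++ [x]) := by
            rw [hmlc, hs, hO]
            simp
          obtain ⟨hleg', happ'⟩ := step_pop hc'0
          apply conclude hleg'
          rw [happ, happ']
          simp only [Rel, Nat.sub_self]
          refine ⟨by simpa using hL, by simpa using hL', hI, by rw [hO], ?_, ?_, ?_,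
            A, B, ?_, ?_, hAx, hBx⟩
          · intro w hw
            rw [getD_set_self (by (try simp only [List.length_set]); omega) _] at hw
            exact hml w (by rw [hs]; exact List.mem_cons_of_mem _ hw)
          · rw [getD_set_self (by (try simp only [List.length_set]); omega) _, getD_set_self (by (try simp only [List.length_set]); omega) _]
          · intro j hjm hjm1
            rw [getD_set_ne (Ne.symm hjm1) _, getD_set_ne (Ne.symm hjm1) _]
            exact hoth j hjm hjm1
          · rw [getD_set_ne (by omega) _]; exact hAB
          · rw [getD_set_ne (by omega) _]; exact hAB'
        · -- m ≥ 2 : stack 0 is untouched by the difference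
          have hm2 : 2 ≤ m := by omega
          have hc'0 : c'.stks.getD 0 [] = (c'.output.length + 1) :: s := by
            rw [hoth 0 (by omega) (by omega), hs, hO]
          obtain ⟨hleg', happ'⟩ := step_pop hc'0
          apply conclude hleg'
          rw [happ, happ']
          simp only [Rel]
          refine ⟨by simpa using hL, by simpa using hL', hI, by rw [hO], ?_, ?_, ?_,
            A, B, ?_, ?_, hAx, hBx⟩
          · intro w hw
            rw [getD_set_ne (by omega) _] at hw
            exact hml w hw
          · rw [getD_set_ne (by omega) _, getD_set_ne (by omega) _]
            exact hmlc
          · intro j hjm hjm1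
            by_cases hj0 : j = 0
            · subst hj0
              rw [getD_set_self (by (try simp only [List.length_set]); omega) _, getD_set_self (by (try simp only [List.length_set]); omega) _]
            · rw [getD_set_ne (Ne.symm hj0) _, getD_set_ne (Ne.symm hj0) _]
              exact hoth j hjm hjm1
          · rw [getD_set_ne (by omega) _]; exact hAB
          · rw [getD_set_ne (by omega) _]; exact hAB'
      · -- CASE internal move
        obtain ⟨_, happ⟩ := step_move hmv0 hmvt hy hcp
        by_cases h1 : mv = m
        · subst h1
          rcases A with _ | ⟨a, A2⟩
          · -- resolution: the old run moves x itself; skip this move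
            simp only [List.nil_append] at hAB hAB'
            have hyx : y = x ∧ s = B := by
              have := hy.symm.trans hAB
              simpa using this
            obtain ⟨rfl, rfl⟩ := hyx
            have hLnil : c.stks.getD (mv - 1) [] = [] := by
              rcases canPush_head hcp with h | ⟨z, l, hzl, hz⟩
              · exact h
              · exact absurd (hml z (by rw [hzl]; simp)) (by omega)
            have heq : applyMove t c mv = c' := by
              rw [happ]
              obtain ⟨ci', cs', co'⟩ := c'
              simp only [Conf.mk.injEq]
              refine ⟨hI.symm, ?_, hO.symm⟩
              apply stks_ext (by simp only [List.length_set]; simp at hL'; omega)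
              intro i
              by_cases hi1 : i = mv - 1
              · subst hi1
                rw [getD_set_self (by (try simp only [List.length_set]); omega) _]
                simp only at hmlc
                rw [hmlc, hLnil]
                simp
              · rw [getD_set_ne (Ne.symm hi1) _]
                by_cases him : i = mv
                · subst him
                  rw [getD_set_self (by (try simp only [List.length_set]); omega) _]
                  simp only at hAB'
                  exact hAB'.symm
                · rw [getD_set_ne (Ne.symm him) _]
                  exact (hoth i him hi1).symm
            refine ⟨σr, by simp, ?_⟩
            rw [← heq]
            exact hrun
          · -- an element of A moves from stack m to m-1
            have hya : y = a ∧ s = A2 ++ x :: B := by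
              have := hy.symm.trans hAB
              simpa using this
            obtain ⟨rfl, rfl⟩ := hya
            have hax : y < x := hAx y (by simp)
            have hy' : c'.stks.getD mv [] = y :: (A2 ++ B) := by
              rw [hAB']; simp
            have hcp' : canPush y (c'.stks.getD (mv - 1) []) = true := by
              rw [hmlc]
              cases hLc : c.stks.getD (mv - 1) [] with
              | nil => simp [canPush, hax]
              | cons w l =>
                rw [hLc] at hcp
                have haw : y < w := by simpa [canPush] using hcp
                simpa [canPush] using haw
            obtain ⟨hleg', happ'⟩ := step_move hmv0 hmvt hy' hcp'
            apply conclude hleg'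
            rw [happ, happ']
            simp only [Rel]
            refine ⟨by simpa using hL, by simpa using hL', hI, hO, ?_, ?_, ?_,
              A2, B, ?_, ?_, fun a' ha' => hAx a' (by simp [ha']), hBx⟩
            · intro w hw
              rw [getD_set_self (by (try simp only [List.length_set]); omega) _] at hw
              rcases List.mem_cons.mp hw with rfl | hw
              · exact hax
              · exact hml w hw
            · rw [getD_set_self (by (try simp only [List.length_set]); omega) _,
                getD_set_self (by (try simp only [List.length_set]); omega) _, hmlc]
              simp
            · intro j hjm hjm1
              rw [getD_set_ne (Ne.symm hjm1) _, getD_set_ne (Ne.symm hjm) _,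
                getD_set_ne (Ne.symm hjm1) _, getD_set_ne (Ne.symm hjm) _]
              exact hoth j hjm hjm1
            · rw [getD_set_ne (by omega) _, getD_set_self (by (try simp only [List.length_set]); omega) _]
            · rw [getD_set_ne (by omega) _, getD_set_self (by (try simp only [List.length_set]); omega) _]
        · by_cases h2 : mv = m - 1
          · -- a move out of stack m-1 (to m-2); so m ≥ 2
            have hm2 : 2 ≤ m := by omega
            subst h2
            have hy' : c'.stks.getD (m - 1) [] = y :: (s ++ [x]) := by
              rw [hmlc, hy]; simp
            have hcp' : canPush y (c'.stks.getD (m - 1 - 1) []) = true := by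
              rw [hoth (m - 1 - 1) (by omega) (by omega)]
              exact hcp
            obtain ⟨hleg', happ'⟩ := step_move hmv0 hmvt hy' hcp'
            apply conclude hleg'
            rw [happ, happ']
            simp only [Rel]
            refine ⟨by simpa using hL, by simpa using hL', hI, hO, ?_, ?_, ?_,
              A, B, ?_, ?_, hAx, hBx⟩
            · intro w hw
              rw [getD_set_ne (by omega) _,
                getD_set_self (by (try simp only [List.length_set]); omega) _] at hw
              exact hml w (by rw [hy]; exact List.mem_cons_of_mem _ hw)
            · rw [getD_set_ne (by omega) _,
                getD_set_self (by (try simp only [List.length_set]); omega) _,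
                getD_set_ne (by omega) _,
                getD_set_self (by (try simp only [List.length_set]); omega) _]
            · intro j hjm hjm1
              by_cases hj2 : j = m - 1 - 1
              · subst hj2
                rw [getD_set_self (by (try simp only [List.length_set]); omega) _,
                  getD_set_self (by (try simp only [List.length_set]); omega) _,
                  hoth (m - 1 - 1) (by omega) (by omega)]
              · rw [getD_set_ne (Ne.symm hj2) _, getD_set_ne (Ne.symm hjm1) _,
                  getD_set_ne (Ne.symm hj2) _, getD_set_ne (Ne.symm hjm1) _]
                exact hoth j hjm hjm1
            · rw [getD_set_ne (by omega) _, getD_set_ne (by omega) _]; exact hAB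
            · rw [getD_set_ne (by omega) _, getD_set_ne (by omega) _]; exact hAB'
          · by_cases h3 : mv = m + 1
            · -- a move from stack m+1 onto stack m
              subst h3
              have hy' : c'.stks.getD (m + 1) [] = y :: s := by
                rw [hoth (m + 1) (by omega) (by omega)]; exact hy
              have hyx : y < x := by
                rcases A with _ | ⟨a, A2⟩
                · simp only [List.nil_append] at hAB
                  rw [Nat.add_sub_cancel, hAB] at hcp
                  simpa [canPush] using hcp
                · rw [Nat.add_sub_cancel, hAB] at hcp
                  have : y < a := by simpa [canPush] using hcp
                  exact lt_trans this (hAx a (by simp))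
              have hcp' : canPush y (c'.stks.getD (m + 1 - 1) []) = true := by
                rw [Nat.add_sub_cancel, hAB']
                rcases A with _ | ⟨a, A2⟩
                · apply canPush_intro
                  cases B with
                  | nil => left; rfl
                  | cons b l =>
                    right; intro z hz
                    simp only [List.nil_append, List.head?_cons, Option.mem_def,
                      Option.some.injEq] at hz
                    subst hz
                    exact lt_trans hyx (hBx b (by simp))
                · rw [Nat.add_sub_cancel, hAB] at hcp
                  have : y < a := by simpa [canPush] using hcp
                  simpa [canPush] using this
              obtain ⟨hleg', happ'⟩ := step_move hmv0 hmvt hy' hcp'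
              apply conclude hleg'
              rw [happ, happ']
              simp only [Rel, Nat.add_sub_cancel]
              refine ⟨by simpa using hL, by simpa using hL', hI, hO, ?_, ?_, ?_,
                y :: A, B, ?_, ?_, ?_, hBx⟩
              · intro w hw
                rw [getD_set_ne (by omega) _, getD_set_ne (by omega) _] at hw
                exact hml w hw
              · rw [getD_set_ne (by omega) _, getD_set_ne (by omega) _,
                  getD_set_ne (by omega) _, getD_set_ne (by omega) _]
                exact hmlc
              · intro j hjm hjm1
                by_cases hj2 : j = m + 1
                · subst hj2
                  rw [getD_set_ne (by omega) _, getD_set_self (by (try simp only [List.length_set]); omega) _,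
                    getD_set_ne (by omega) _, getD_set_self (by (try simp only [List.length_set]); omega) _]
                · rw [getD_set_ne (by omega) _, getD_set_ne (Ne.symm hj2) _,
                    getD_set_ne (by omega) _, getD_set_ne (Ne.symm hj2) _]
                  exact hoth j hjm hjm1
              · rw [getD_set_self (by (try simp only [List.length_set]); omega) _, hAB]
                simp
              · rw [getD_set_self (by (try simp only [List.length_set]); omega) _, hAB']
                simp
              · intro a' ha'
                rcases List.mem_cons.mp ha' with rfl | ha'
                · exact hyx
                · exact hAx a' ha'
            · -- a move not touching stacks m, m-1
              have hne1 : mv ≠ m := h1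
              have hne2 : mv ≠ m - 1 := h2
              have hne3 : mv - 1 ≠ m := by omega
              have hne4 : mv - 1 ≠ m - 1 := by omega
              have hy' : c'.stks.getD mv [] = y :: s := by
                rw [hoth mv hne1 hne2]; exact hy
              have hcp' : canPush y (c'.stks.getD (mv - 1) []) = true := by
                rw [hoth (mv - 1) hne3 hne4]; exact hcp
              obtain ⟨hleg', happ'⟩ := step_move hmv0 hmvt hy' hcp'
              apply conclude hleg'
              rw [happ, happ']
              have hmvlen : mv < c.stks.length := lt_length_of_getD_ne (by rw [hy]; simp)
              have hmvlen' : mv < c'.stks.length := lt_length_of_getD_ne (by rw [hy']; simp)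
              simp only [Rel]
              refine ⟨by simpa using hL, by simpa using hL', hI, hO, ?_, ?_, ?_,
                A, B, ?_, ?_, hAx, hBx⟩
              · intro w hw
                rw [getD_set_ne (by omega) _, getD_set_ne (by omega) _] at hw
                exact hml w hw
              · rw [getD_set_ne (by omega) _, getD_set_ne (by omega) _,
                  getD_set_ne (by omega) _, getD_set_ne (by omega) _]
                exact hmlc
              · intro j hjm hjm1
                by_cases hja : j = mv - 1
                · subst hja
                  rw [getD_set_self (by (try simp only [List.length_set]); omega) _,
                    getD_set_self (by (try simp only [List.length_set]); omega) _,
                    hoth (mv - 1) hne3 hne4]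
                · by_cases hjb : j = mv
                  · subst hjb
                    rw [getD_set_ne (Ne.symm hja) _, getD_set_self (by (try simp only [List.length_set]); omega) _,
                      getD_set_ne (Ne.symm hja) _, getD_set_self (by (try simp only [List.length_set]); omega) _]
                  · rw [getD_set_ne (Ne.symm hja) _, getD_set_ne (Ne.symm hjb) _,
                      getD_set_ne (Ne.symm hja) _, getD_set_ne (Ne.symm hjb) _]
                    exact hoth j hjm hjm1
              · rw [getD_set_ne (by omega) _, getD_set_ne (by omega) _]; exact hAB
              · rw [getD_set_ne (by omega) _, getD_set_ne (by omega) _]; exact hAB'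
      · -- CASE push
        replace hmvt := hmvt.symm
        subst hmvt
        obtain ⟨_, happ⟩ := step_push ht0 hin hcp
        have hin' : c'.input = x0 :: rest := by rw [hI]; exact hin
        by_cases h1 : m = t - 1
        · -- pushing onto stack m
          subst h1
          have hx0x : x0 < x := by
            rcases A with _ | ⟨a, A2⟩
            · simp only [List.nil_append] at hAB
              rw [hAB] at hcp
              simpa [canPush] using hcp
            · rw [hAB] at hcp
              have : x0 < a := by simpa [canPush] using hcp
              exact lt_trans this (hAx a (by simp))
          have hcp' : canPush x0 (c'.stks.getD (t - 1) []) = true := by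
            rw [hAB']
            rcases A with _ | ⟨a, A2⟩
            · apply canPush_intro
              cases B with
              | nil => left; rfl
              | cons b l =>
                right; intro z hz
                simp only [List.nil_append, List.head?_cons, Option.mem_def,
                  Option.some.injEq] at hz
                subst hz
                exact lt_trans hx0x (hBx b (by simp))
            · rw [hAB] at hcp
              have : x0 < a := by simpa [canPush] using hcp
              simpa [canPush] using this
          obtain ⟨hleg', happ'⟩ := step_push ht0 hin' hcp'
          apply conclude hleg'
          rw [happ, happ']
          simp only [Rel]
          refine ⟨by simpa using hL, by simpa using hL', by trivial, hO, ?_, ?_, ?_,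
            x0 :: A, B, ?_, ?_, ?_, hBx⟩
          · intro w hw
            rw [getD_set_ne (by omega) _] at hw
            exact hml w hw
          · rw [getD_set_ne (by omega) _, getD_set_ne (by omega) _]
            exact hmlc
          · intro j hjm hjm1
            rw [getD_set_ne (Ne.symm hjm) _, getD_set_ne (Ne.symm hjm) _]
            exact hoth j hjm hjm1
          · rw [getD_set_self (by (try simp only [List.length_set]); omega) _, hAB]; simp
          · rw [getD_set_self (by (try simp only [List.length_set]); omega) _, hAB']; simp
          · intro a' ha'
            rcases List.mem_cons.mp ha' with rfl | ha'
            · exact hx0x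
            · exact hAx a' ha'
        · -- pushing onto a stack different from m and m-1
          have hne1 : t - 1 ≠ m := Ne.symm h1
          have hne2 : t - 1 ≠ m - 1 := by omega
          have hcp' : canPush x0 (c'.stks.getD (t - 1) []) = true := by
            rw [hoth (t - 1) hne1 hne2]; exact hcp
          obtain ⟨hleg', happ'⟩ := step_push ht0 hin' hcp'
          apply conclude hleg'
          rw [happ, happ']
          simp only [Rel]
          refine ⟨by simpa using hL, by simpa using hL', by trivial, hO, ?_, ?_, ?_,
            A, B, ?_, ?_, hAx, hBx⟩
          · intro w hw
            rw [getD_set_ne (by omega) _] at hw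
            exact hml w hw
          · rw [getD_set_ne (by omega) _, getD_set_ne (by omega) _]
            exact hmlc
          · intro j hjm hjm1
            by_cases hj : j = t - 1
            · subst hj
              rw [getD_set_self (by (try simp only [List.length_set]); omega) _, getD_set_self (by (try simp only [List.length_set]); omega) _,
                hoth (t - 1) hne1 hne2]
            · rw [getD_set_ne (Ne.symm hj) _, getD_set_ne (Ne.symm hj) _]
              exact hoth j hjm hjm1
          · rw [getD_set_ne (by omega) _]; exact hAB
          · rw [getD_set_ne (by omega) _]; exact hAB'
    · rw [if_neg hleg] at hrun
      exact absurd hrun (by simp)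

/-- All stacks are increasing from top to bottom. -/
def Incs (c : Conf) : Prop := ∀ j : ℕ, List.Chain' (· < ·) (c.stks.getD j [])

lemma length_applyMove (t : ℕ) (c : Conf) (mv : ℕ) :
    (applyMove t c mv).stks.length = c.stks.length := by
  unfold applyMove
  split_ifs <;> split <;> simp

lemma incs_applyMove {t mv : ℕ} {c : Conf} (h : legal t c mv = true) (hinc : Incs c) :
    Incs (applyMove t c mv) := by
  rcases legal_cases h with ⟨hmv0, s, hs⟩ | ⟨hmv0, hmvt, y, s, hy, hcp⟩ |
    ⟨hmvt, ht0, x0, rest, hin, hcp⟩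
  · subst hmv0
    obtain ⟨_, happ⟩ := step_pop hs
    rw [happ]
    intro j
    by_cases hj : j = 0
    · subst hj
      have h0 : 0 < c.stks.length := lt_length_of_getD_ne (by rw [hs]; simp)
      rw [getD_set_self h0 _]
      have := hinc 0
      rw [hs] at this
      exact this.tail
    · rw [getD_set_ne (Ne.symm hj) _]
      exact hinc j
  · obtain ⟨_, happ⟩ := step_move hmv0 hmvt hy hcp
    rw [happ]
    intro j
    have hmvlen : mv < c.stks.length := lt_length_of_getD_ne (by rw [hy]; simp)
    by_cases hj1 : j = mv - 1
    · subst hj1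
      rw [getD_set_self (by simp only [List.length_set]; omega) _]
      exact List.isChain_cons.2 ⟨canPush_head' hcp, hinc (mv - 1)⟩
    · rw [getD_set_ne (Ne.symm hj1) _]
      by_cases hj2 : j = mv
      · rw [hj2, getD_set_self (by omega) _]
        have := hinc mv
        rw [hy] at this
        exact this.tail
      · rw [getD_set_ne (Ne.symm hj2) _]
        exact hinc j
  · replace hmvt := hmvt.symm
    subst hmvt
    obtain ⟨_, happ⟩ := step_push ht0 hin hcp
    rw [happ]
    intro j
    by_cases hlen : t - 1 < c.stks.length
    · by_cases hj : j = t - 1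
      · subst hj
        rw [getD_set_self hlen _]
        exact List.isChain_cons.2 ⟨canPush_head' hcp, hinc (t - 1)⟩
      · rw [getD_set_ne (Ne.symm hj) _]
        exact hinc j
    · rw [List.set_eq_of_length_le (by omega)]
      exact hinc j

lemma noGap_of_adj {t : ℕ} {c : Conf}
    (h : ∀ mq, 0 < mq → mq < t → c.stks.getD mq [] ≠ [] → c.stks.getD (mq - 1) [] ≠ []) :
    NoGap t c := by
  have key : ∀ i j, j + i < t → c.stks.getD (j + i) [] ≠ [] → c.stks.getD j [] ≠ [] := by
    intro i
    induction i with
    | zero => intro j _ hne; simpa using hne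
    | succ k ihk =>
      intro j hlt hne
      have h2 := h (j + k + 1) (by omega) (by omega)
        (by rw [show j + k + 1 = j + (k + 1) by omega]; exact hne)
      have h3 : c.stks.getD (j + k) [] ≠ [] := by
        rw [show j + k = j + k + 1 - 1 by omega]; exact h2
      exact ihk j (by omega) h3
  intro j j' hjj hj't hne
  exact key (j' - j) j (by omega) (by rw [show j + (j' - j) = j' by omega]; exact hne)

lemma exists_adj_gap {t : ℕ} {c : Conf} (hng : ¬ NoGap t c) :
    ∃ mq, 0 < mq ∧ mq < t ∧ c.stks.getD mq [] ≠ [] ∧ c.stks.getD (mq - 1) [] = [] := by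
  by_contra hc
  push_neg at hc
  exact hng (noGap_of_adj fun mq h1 h2 h3 => hc mq h1 h2 h3)

lemma driver {t n : ℕ} : ∀ (N : ℕ) (σ : List ℕ) (c : Conf), σ.length ≤ N →
    c.stks.length = t → Incs c → runLegal t c σ = some (finalConf t n) →
    ∃ σ₂ : List ℕ, runLegal t c σ₂ = some (finalConf t n) ∧
      ∀ k < σ₂.length, σ₂.getD k 0 = t →
        ∀ c₂ : Conf, runLegal t c (σ₂.take k) = some c₂ → NoGap t c₂ := by
  intro N
  induction N with
  | zero =>
    intro σ c hN _ _ hrun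
    have hσ : σ = [] := List.length_eq_zero_iff.mp (by omega)
    subst hσ
    exact ⟨[], hrun, by intro k hk; simp at hk⟩
  | succ N ihN =>
    intro σ c hN hlen hinc hrun
    match σ with
    | [] => exact ⟨[], hrun, by intro k hk; simp at hk⟩
    | mv :: σr =>
      simp only [runLegal] at hrun
      by_cases hleg : legal t c mv = true
      · rw [if_pos hleg] at hrun
        by_cases hcase : mv = t ∧ ¬ NoGap t c
        · obtain ⟨hmvt, hng⟩ := hcase
          obtain ⟨m, hm0, hmt, hne, hemp⟩ := exists_adj_gap hng
          obtain ⟨w, s, hw⟩ : ∃ w s, c.stks.getD m [] = w :: s := by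
            cases hws : c.stks.getD m [] with
            | nil => exact absurd hws hne
            | cons w s => exact ⟨w, s, rfl⟩
          have hcp : canPush w (c.stks.getD (m - 1) []) = true := by
            rw [hemp]; rfl
          obtain ⟨hlegS, happS⟩ := step_move hm0 hmt hw hcp
          have hBx : ∀ b ∈ s, w < b := by
            have := hinc m
            rw [hw] at this
            exact chain_lt_head this
          have hrel : Rel t m w c (applyMove t c m) := by
            rw [happS]
            simp only [Rel]
            refine ⟨hlen, by simpa using hlen, by trivial, by trivial, ?_, ?_, ?_,
              [], s, by simpa using hw, ?_, by simp, hBx⟩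
            · rw [hemp]; simp
            · rw [getD_set_self (by simp only [List.length_set]; omega) _, hemp]
              simp
            · intro j hjm hjm1
              rw [getD_set_ne (Ne.symm hjm1) _, getD_set_ne (Ne.symm hjm) _]
            · rw [getD_set_ne (by omega) _, getD_set_self (by omega) _]
              simp
          have hrunfull : runLegal t c (mv :: σr) = some (finalConf t n) := by
            simp only [runLegal, if_pos hleg]
            exact hrun
          obtain ⟨σ', hσ'len, hσ'run⟩ := exch hm0 hmt (mv :: σr) hrel hrunfull
          obtain ⟨σ₂, h2run, h2prop⟩ := ihN σ' (applyMove t c m)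
            (by simp only [List.length_cons] at hσ'len hN; omega)
            (by rw [length_applyMove]; exact hlen)
            (incs_applyMove hlegS hinc) hσ'run
          refine ⟨m :: σ₂, ?_, ?_⟩
          · simp only [runLegal, if_pos hlegS]
            exact h2run
          · intro k hk hkt c₂ hc₂
            match k with
            | 0 =>
              simp only [List.getD_cons_zero] at hkt
              omega
            | k + 1 =>
              simp only [List.getD_cons_succ] at hkt
              simp only [List.take_succ_cons, runLegal, if_pos hlegS] at hc₂
              exact h2prop k (by simpa using hk) hkt c₂ hc₂
        · obtain ⟨σ₂, h2run, h2prop⟩ := ihN σr (applyMove t c mv)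
            (by simp only [List.length_cons] at hN; omega)
            (by rw [length_applyMove]; exact hlen)
            (incs_applyMove hleg hinc) hrun
          refine ⟨mv :: σ₂, ?_, ?_⟩
          · simp only [runLegal, if_pos hleg]
            exact h2run
          · intro k hk hkt c₂ hc₂
            match k with
            | 0 =>
              simp only [List.getD_cons_zero] at hkt
              simp only [List.take_zero, runLegal, Option.some.injEq] at hc₂
              subst hc₂
              by_cases hng : NoGap t c
              · exact hng
              · exact absurd ⟨hkt, hng⟩ hcase
            | k + 1 =>
              simp only [List.getD_cons_succ] at hkt
              simp only [List.take_succ_cons, runLegal, if_pos hleg] at hc₂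
              exact h2prop k (by simpa using hk) hkt c₂ hc₂
      · rw [if_neg hleg] at hrun
        exact absurd hrun (by simp)
end StmtAux

/-- A permutation sortable by `t` stacks in series is sortable by a sequence of legal
moves leaving, at each critical moment (just before an element enters the stacks),
no empty stack to the left of a nonempty stack. -/
theorem stmt11 (t : ℕ) (p : List ℕ) (h : Sortable t p) :
    ∃ ms : List ℕ, runLegal t (initConf t p) ms = some (finalConf t p.length) ∧
      ∀ k < ms.length, ms.getD k 0 = t →
        ∀ c : Conf, runLegal t (initConf t p) (ms.take k) = some c → NoGap t c := by
  obtain ⟨ms, hms⟩ := h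
  obtain ⟨σ₂, hrun, hprop⟩ := StmtAux.driver (t := t) (n := p.length) ms.length ms
    (initConf t p) le_rfl (by simp [initConf])
    (fun j => by
      have : (initConf t p).stks.getD j [] = [] := StmtAux.getD_replicate t j
      rw [this]
      exact List.isChain_nil) hms
  exact ⟨σ₂, hrun, hprop⟩
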